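/- Let N ≥ 1 and let O be a nonempty finite set. For each o ∈ O let q(o) ∈ ℝ^N be a nonzero vector with 0 ≤ q(o)(a) ≤ Q_max for all coordinates a, let d : O → ℝ be nonnegative weights with Σ_{o∈O} d(o) = 1, and set H = Σ_{o∈O} d(o)·q(o), assumed nonzero. For each o let ε(o) = 1 − ⟪q(o),H⟫/(‖q(o)‖·‖H‖) be the cosine distance between q(o) and H. Then Σ_{o∈O} d(o)·max_a q(o)(a) − max_a H(a) ≤ √(2N) · Q_max · Σ_{o∈O} d(o)·√(ε(o)). -/

import Mathlib

/-!
Split each `q o` as `c • H + r` with `c = ⟪q o, H⟫ / ‖H‖² ≥ 0` and `r ⊥ H`. Coordinatewise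
`max q o ≤ c · max H + ‖r‖`, and the coefficients average to one, `∑ d o · c = ⟪H, H⟫ / ‖H‖² = 1`,
because `H = ∑ d o • q o`. Finally `‖r‖ = ‖q o‖ sin θ` with `sin² θ ≤ 2 (1 - cos θ) = 2 ε o`,
and `‖q o‖ ≤ √N · Qmax`.
-/

open RealInnerProductSpace InnerProductGeometry Finset

section InnerProductSpace

variable {F : Type*} [NormedAddCommGroup F] [InnerProductSpace ℝ F]

/-- With `t = ⟪x, y⟫ / ‖y‖` the left side is `‖x‖² - t²` and the right side `2‖x‖² - 2‖x‖t`;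
their difference is `(‖x‖ - t)²`. -/
lemma norm_sub_inner_div_smul_sq_le (x y : F) :
    ‖x - (⟪x, y⟫ / ‖y‖ ^ 2) • y‖ ^ 2 ≤ 2 * (1 - Real.cos (angle x y)) * ‖x‖ ^ 2 := by
  rw [cos_angle]
  rcases eq_or_ne y 0 with rfl | hy
  · simp only [inner_zero_right, norm_zero, zero_div, zero_smul, sub_zero, mul_zero]
    nlinarith [sq_nonneg ‖x‖]
  rcases eq_or_ne x 0 with rfl | hx
  · simp
  have hy' : 0 < ‖y‖ := norm_pos_iff.mpr hy
  have hx' : 0 < ‖x‖ := norm_pos_iff.mpr hx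
  rw [norm_sub_sq_real, real_inner_smul_right, norm_smul, Real.norm_eq_abs, mul_pow, sq_abs]
  field_simp
  nlinarith [sq_nonneg (‖x‖ * ‖y‖ - ⟪x, y⟫)]

lemma norm_sub_inner_div_smul_le (x y : F) :
    ‖x - (⟪x, y⟫ / ‖y‖ ^ 2) • y‖ ≤ √(2 * (1 - Real.cos (angle x y))) * ‖x‖ := by
  rw [← Real.sqrt_sq (norm_nonneg x), ← Real.sqrt_mul' _ (sq_nonneg _),
    ← Real.sqrt_sq (norm_nonneg (x - _))]
  exact Real.sqrt_le_sqrt (norm_sub_inner_div_smul_sq_le x y)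

lemma sum_mul_inner_div_norm_sq_eq_one {O : Type*} [Fintype O] (d : O → ℝ) (q : O → F) {H : F}
    (hH : ∑ o, d o • q o = H) (hH0 : H ≠ 0) :
    ∑ o, d o * (⟪q o, H⟫ / ‖H‖ ^ 2) = 1 := by
  have hH2 : ‖H‖ ^ 2 ≠ 0 := pow_ne_zero 2 (norm_ne_zero_iff.mpr hH0)
  simp_rw [← mul_div_assoc, ← sum_div, ← real_inner_smul_left, ← sum_inner, hH,
    real_inner_self_eq_norm_sq, div_self hH2]

end InnerProductSpace

namespace EuclideanSpace

variable {ι : Type*} [Fintype ι]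

lemma norm_le_sqrt_card_mul {x : EuclideanSpace ℝ ι} {C : ℝ} (hC : 0 ≤ C) (hx : ∀ i, |x i| ≤ C) :
    ‖x‖ ≤ √(Fintype.card ι) * C := by
  rw [EuclideanSpace.norm_eq, ← Real.sqrt_sq hC, ← Real.sqrt_mul (Nat.cast_nonneg _)]
  refine Real.sqrt_le_sqrt ?_
  calc ∑ i, ‖x i‖ ^ 2 ≤ ∑ _i : ι, C ^ 2 := by
        gcongr with i
        exact (Real.norm_eq_abs _).trans_le (hx i)
    _ = Fintype.card ι * C ^ 2 := by rw [sum_const, card_univ, nsmul_eq_mul]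

lemma inner_nonneg_of_nonneg {x y : EuclideanSpace ℝ ι} (hx : ∀ i, 0 ≤ x i) (hy : ∀ i, 0 ≤ y i) :
    0 ≤ ⟪x, y⟫ := by
  simp only [PiLp.inner_apply, RCLike.inner_apply, conj_trivial]
  exact sum_nonneg fun i _ => mul_nonneg (hy i) (hx i)

lemma sup'_le_mul_sup'_add_norm_sub (hι : (univ : Finset ι).Nonempty) (x y : EuclideanSpace ℝ ι)
    {c : ℝ} (hc : 0 ≤ c) :
    univ.sup' hι (fun i => x i) ≤ c * univ.sup' hι (fun i => y i) + ‖x - c • y‖ := by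
  refine sup'_le _ _ fun i _ => ?_
  have hres : x i - c * y i ≤ ‖x - c • y‖ :=
    (le_abs_self _).trans (by simpa using PiLp.norm_apply_le (x - c • y) i)
  have hy : c * y i ≤ c * univ.sup' hι (fun i => y i) :=
    mul_le_mul_of_nonneg_left (le_sup' (fun i => y i) (mem_univ i)) hc
  linarith

end EuclideanSpace

theorem per_cluster_gap_single_block_general (N : ℕ) (hN : 1 ≤ N)
    {O : Type*} [Fintype O] (Qmax : ℝ)
    (q : O → EuclideanSpace ℝ (Fin N))
    (hq : ∀ o a, 0 ≤ q o a ∧ q o a ≤ Qmax)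
    (d : O → ℝ) (hd : ∀ o, 0 ≤ d o)
    (H : EuclideanSpace ℝ (Fin N)) (hH : H = ∑ o, d o • q o) (hH0 : H ≠ 0)
    (ε : O → ℝ) (hε : ∀ o, ε o = 1 - ⟪q o, H⟫ / (‖q o‖ * ‖H‖)) :
    (∑ o, d o * Finset.univ.sup' (Finset.univ_nonempty_iff.mpr ⟨⟨0, hN⟩⟩) (fun a => q o a))
        - Finset.univ.sup' (Finset.univ_nonempty_iff.mpr ⟨⟨0, hN⟩⟩) (fun a => H a)
      ≤ Real.sqrt (2 * N) * Qmax * ∑ o, d o * Real.sqrt (ε o) := by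
  set supH := univ.sup' (univ_nonempty_iff.mpr ⟨⟨0, hN⟩⟩) (fun a => H a)
  set c : O → ℝ := fun o => ⟪q o, H⟫ / ‖H‖ ^ 2
  have hH_nonneg : ∀ a, 0 ≤ H a := fun a => by
    simp only [hH, WithLp.ofLp_sum, Finset.sum_apply, PiLp.smul_apply, smul_eq_mul]
    exact sum_nonneg fun o _ => mul_nonneg (hd o) (hq o a).1
  have hgap : ∀ o, univ.sup' (univ_nonempty_iff.mpr ⟨⟨0, hN⟩⟩) (fun a => q o a)
      ≤ c o * supH + √(2 * N) * Qmax * √(ε o) := fun o => by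
    have hQmax : 0 ≤ Qmax := (hq o ⟨0, hN⟩).1.trans (hq o ⟨0, hN⟩).2
    have hc : 0 ≤ c o := div_nonneg
      (EuclideanSpace.inner_nonneg_of_nonneg (fun a => (hq o a).1) hH_nonneg) (sq_nonneg _)
    have hqnorm : ‖q o‖ ≤ √N * Qmax := by
      simpa using EuclideanSpace.norm_le_sqrt_card_mul hQmax
        fun a => abs_le.mpr ⟨by linarith [(hq o a).1], (hq o a).2⟩
    calc _ ≤ c o * supH + ‖q o - c o • H‖ := EuclideanSpace.sup'_le_mul_sup'_add_norm_sub _ _ _ hc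
      _ ≤ c o * supH + √(2 * ε o) * (√N * Qmax) := by
          rw [hε o, ← cos_angle]
          gcongr
          exact (norm_sub_inner_div_smul_le _ _).trans (by gcongr)
      _ = c o * supH + √(2 * N) * Qmax * √(ε o) := by
          rw [Real.sqrt_mul zero_le_two, Real.sqrt_mul zero_le_two]; ring
  calc _ ≤ ∑ o, d o * (c o * supH + √(2 * N) * Qmax * √(ε o)) - supH :=
        sub_le_sub_right (sum_le_sum fun o _ => mul_le_mul_of_nonneg_left (hgap o) (hd o)) _
    _ = ∑ o, (d o * c o * supH + √(2 * N) * Qmax * (d o * √(ε o))) - supH := by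
        congr 1; exact sum_congr rfl fun o _ => by ring
    _ = √(2 * N) * Qmax * ∑ o, d o * √(ε o) := by
        rw [sum_add_distrib, ← sum_mul, ← mul_sum, sum_mul_inner_div_norm_sq_eq_one d q hH.symm hH0]
        ring

theorem per_cluster_gap_single_block (N : ℕ) (hN : 1 ≤ N)
    {O : Type*} [Fintype O] [Nonempty O] (Qmax : ℝ)
    (q : O → EuclideanSpace ℝ (Fin N)) (hq0 : ∀ o, q o ≠ 0)
    (hq : ∀ o a, 0 ≤ q o a ∧ q o a ≤ Qmax)
    (d : O → ℝ) (hd : ∀ o, 0 ≤ d o) (hdsum : ∑ o, d o = 1)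
    (H : EuclideanSpace ℝ (Fin N)) (hH : H = ∑ o, d o • q o) (hH0 : H ≠ 0)
    (ε : O → ℝ) (hε : ∀ o, ε o = 1 - ⟪q o, H⟫ / (‖q o‖ * ‖H‖)) :
    (∑ o, d o * Finset.univ.sup' (Finset.univ_nonempty_iff.mpr ⟨⟨0, hN⟩⟩) (fun a => q o a))
        - Finset.univ.sup' (Finset.univ_nonempty_iff.mpr ⟨⟨0, hN⟩⟩) (fun a => H a)
      ≤ Real.sqrt (2 * N) * Qmax * ∑ o, d o * Real.sqrt (ε o) :=
  per_cluster_gap_single_block_general N hN Qmax q hq d hd H hH hH0 ε hε
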